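/- Let λ > 0 and let j be an integer with j > λ. Then the function r ↦ J_j(λr) is monotone increasing on [0, 1]; consequently the Fourier-Bessel function b_{λ,j} satisfies sup_{x ∈ Ω} |b_{λ,j}(x)| = J_j(λ), where Ω is the closed unit disk in ℝ². -/

import Mathlib

open MeasureTheory Metric

/-- Bessel function of the first kind of nonnegative integer order. -/
noncomputable def besselJnat (n : ℕ) (x : ℝ) : ℝ :=
  ∑' k : ℕ, ((-1 : ℝ) ^ k / ((Nat.factorial k : ℝ) * (Nat.factorial (n + k) : ℝ))) *
    (x / 2) ^ (n + 2 * k)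

/-- Bessel function of the first kind of integer order, with `J_{-n} = (-1)^n J_n`. -/
noncomputable def besselJ (n : ℤ) (x : ℝ) : ℝ :=
  if 0 ≤ n then besselJnat n.toNat x else (-1 : ℝ) ^ n.natAbs * besselJnat n.natAbs x

/-- The Fourier-Bessel function `b_{λ,j}(x) = e^{ijθ} J_j(λ r)` on `ℝ² ≃ ℂ`. -/
noncomputable def fourierBessel (lam : ℝ) (j : ℤ) (z : ℂ) : ℂ :=
  Complex.exp (Complex.I * j * z.arg) * besselJ j (lam * ‖z‖)

/-- Normalized uniform measure `dx/π` on the closed unit disk. -/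
noncomputable def unifDisk : Measure ℂ :=
  (ENNReal.ofReal Real.pi)⁻¹ • (volume.restrict (closedBall (0 : ℂ) 1))

/-- Normalized arc-length measure `dσ/(2π)` on the unit circle. -/
noncomputable def circleUnif : Measure ℂ :=
  (ENNReal.ofReal (2 * Real.pi))⁻¹ •
    Measure.map (fun θ : ℝ => Complex.exp (θ * Complex.I))
      (volume.restrict (Set.Ioc (0 : ℝ) (2 * Real.pi)))

/-- The mixed measure `ν_α = (1-α) dx/π + α dσ/(2π)`. -/
noncomputable def nuAlpha (a : ℝ) : Measure ℂ :=
  ENNReal.ofReal (1 - a) • unifDisk + ENNReal.ofReal a • circleUnif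

/-- Squared `L²(ν)` norm of a function. -/
noncomputable def l2normSq (ν : Measure ℂ) (f : ℂ → ℂ) : ℝ :=
  ∫ z, ‖f z‖ ^ 2 ∂ν

/-- A measure on `ℂ` invariant under every rotation about the origin. -/
def RotationInvariant (ν : Measure ℂ) : Prop :=
  ∀ θ : ℝ, Measure.map (fun z : ℂ => Complex.exp (θ * Complex.I) * z) ν = ν

/-- Plane wave `e^{i k·x}` with wave vector `k = λ(cos φ, sin φ)`. -/
noncomputable def planeWaveFn (lam phi : ℝ) (z : ℂ) : ℂ :=
  Complex.exp (Complex.I * ((lam * (Real.cos phi * z.re + Real.sin phi * z.im) : ℝ) : ℂ))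

/-- Angle `φ_l = 2πl/(2m+1)`. -/
noncomputable def phiAngle (m : ℕ) (l : ℤ) : ℝ := 2 * Real.pi * l / (2 * m + 1)

/-- Discretized plane-wave combination
`b_j^m = (1/((2m+1) i^j)) Σ_{l=-m}^m e^{ijφ_l} e_{k_l}`. -/
noncomputable def pwave (lam : ℝ) (m : ℕ) (j : ℤ) (z : ℂ) : ℂ :=
  (1 / (((2 * m + 1 : ℕ) : ℂ) * Complex.I ^ j)) *
    ∑ l ∈ Finset.Icc (-(m : ℤ)) (m : ℤ),
      Complex.exp (Complex.I * j * ((phiAngle m l : ℝ) : ℂ)) * planeWaveFn lam (phiAngle m l) z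

/-- The quantity `K(V_m^b, ν)` for the Fourier-Bessel space on the unit disk. -/
noncomputable def Kb (lam : ℝ) (ν : Measure ℂ) (m : ℕ) : ℝ :=
  ⨆ z : closedBall (0 : ℂ) 1,
    ∑ j ∈ Finset.Icc (-(m : ℤ)) (m : ℤ),
      ‖fourierBessel lam j ↑z‖ ^ 2 / l2normSq ν (fourierBessel lam j)

/-- The quantity `K(V_m^e, ν)` for the plane-wave space on the unit disk. -/
noncomputable def Ke (lam : ℝ) (ν : Measure ℂ) (m : ℕ) : ℝ :=
  ⨆ z : closedBall (0 : ℂ) 1,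
    ∑ j ∈ Finset.Icc (-(m : ℤ)) (m : ℤ),
      ‖pwave lam m j ↑z‖ ^ 2 / l2normSq ν (pwave lam m j)

/-- Laplacian of a function on `ℝ² ≃ ℂ`. -/
noncomputable def laplacian2 (u : ℂ → ℂ) (z : ℂ) : ℂ :=
  fderiv ℝ (fun w => fderiv ℝ u w 1) z 1 + fderiv ℝ (fun w => fderiv ℝ u w Complex.I) z Complex.I

/-!
Write `θ = x d/dx` for the Euler operator, which multiplies `(x/2)^m` by `m`. Differentiating the
power series termwise turns Bessel's equation into `θ² J_n = (n² - x²) J_n`. Near `0`, both `J_n`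
and `θ J_n` are positive multiples of `x^n` up to higher order terms. On `(0, n)`, positivity of
`J_n` makes `θ J_n` increasing and positivity of `θ J_n` makes `J_n` increasing, so neither can
vanish first on `(0, n]`. Hence `J_n' = θ J_n / x > 0` there, and for `λ < j` the function
`r ↦ J_j(λr)` increases on `[0, 1]`. As `|b_{λ,j}(x)| = |J_j(λ|x|)|` with `J_j ≥ 0` on `[0, λ]`,
the supremum over the disk is attained on the unit circle.
-/

open Set Filter Topology
open scoped Nat

theorem pos_on_Ioc_of_deriv_pos_of_pos {f g : ℝ → ℝ} {c : ℝ}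
    (hf : ContinuousOn f (Icc 0 c)) (hg : ContinuousOn g (Icc 0 c))
    (hf0 : 0 ≤ f 0) (hg0 : 0 ≤ g 0) (hnear : ∀ᶠ x in 𝓝[>] 0, 0 < f x ∧ 0 < g x)
    (hf' : ∀ x ∈ Ioo 0 c, 0 < g x → 0 < deriv f x)
    (hg' : ∀ x ∈ Ioo 0 c, 0 < f x → 0 < deriv g x) :
    ∀ x ∈ Ioc 0 c, 0 < f x ∧ 0 < g x := by
  suffices ∀ x ∈ Ioc 0 c, 0 < min (f x) (g x) by simpa only [lt_min_iff] using this
  obtain ⟨ε, hε, hεsub⟩ := mem_nhdsGT_iff_exists_Ioo_subset.1 hnear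
  have hnear' : ∀ x ∈ Ioo 0 ε, 0 < min (f x) (g x) := fun x hx => lt_min_iff.2 (hεsub hx)
  by_contra! ⟨y, hy, hy_bad⟩
  -- `x₀` is the first point where `f` or `g` fails to be positive
  set B := Icc ε c ∩ (fun x => min (f x) (g x)) ⁻¹' Iic 0
  have hB : IsClosed B :=
    ((hf.inf hg).mono (Icc_subset_Icc_left hε.le)).preimage_isClosed_of_isClosed isClosed_Icc
      isClosed_Iic
  have hB_bdd : BddBelow B := ⟨ε, fun x hx => hx.1.1⟩
  have hyB : y ∈ B :=
    ⟨⟨le_of_not_gt fun hyε => (hnear' y ⟨hy.1, hyε⟩).not_ge hy_bad, hy.2⟩, hy_bad⟩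
  set x₀ := sInf B
  have hx₀B : x₀ ∈ B := hB.csInf_mem ⟨y, hyB⟩ hB_bdd
  have hx₀_pos : 0 < x₀ := hε.trans_le hx₀B.1.1
  have hgood : ∀ t ∈ Ioo 0 x₀, 0 < f t ∧ 0 < g t := by
    intro t ht
    rw [← lt_min_iff]
    rcases lt_or_ge t ε with htε | hεt
    · exact hnear' t ⟨ht.1, htε⟩
    by_contra! hbad
    exact ht.2.not_ge (csInf_le hB_bdd ⟨⟨hεt, ht.2.le.trans hx₀B.1.2⟩, hbad⟩)
  have hsub : Icc 0 x₀ ⊆ Icc 0 c := Icc_subset_Icc_right hx₀B.1.2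
  have hint : ∀ t ∈ interior (Icc 0 x₀), t ∈ Ioo 0 c ∧ 0 < f t ∧ 0 < g t := fun t ht => by
    rw [interior_Icc] at ht
    exact ⟨⟨ht.1, ht.2.trans_le hx₀B.1.2⟩, hgood t ht⟩
  have h0 : (0 : ℝ) ∈ Icc 0 x₀ := left_mem_Icc.2 hx₀_pos.le
  have hx₀ : x₀ ∈ Icc 0 x₀ := right_mem_Icc.2 hx₀_pos.le
  have hfx₀ : 0 < f x₀ := hf0.trans_lt <| strictMonoOn_of_deriv_pos (convex_Icc 0 x₀)
    (hf.mono hsub) (fun t ht => hf' t (hint t ht).1 (hint t ht).2.2) h0 hx₀ hx₀_pos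
  have hgx₀ : 0 < g x₀ := hg0.trans_lt <| strictMonoOn_of_deriv_pos (convex_Icc 0 x₀)
    (hg.mono hsub) (fun t ht => hg' t (hint t ht).1 (hint t ht).2.1) h0 hx₀ hx₀_pos
  exact (lt_min hfx₀ hgx₀).not_ge hx₀B.2

noncomputable def besselCoeff (n k : ℕ) : ℝ := (-1) ^ k / (k ! * (n + k)! : ℝ)

/-- `θ^p J_n`, where `θ = x d/dx` acts on `(x/2)^m` as multiplication by `m`. -/
noncomputable def eulerBesselJ (n p : ℕ) (x : ℝ) : ℝ :=
  ∑' k, ((n + 2 * k : ℕ) : ℝ) ^ p * besselCoeff n k * (x / 2) ^ (n + 2 * k)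

theorem eulerBesselJ_zero (n : ℕ) : eulerBesselJ n 0 = besselJnat n := by
  ext x
  simp [eulerBesselJ, besselJnat, besselCoeff]

theorem eulerBesselJ_apply_zero {n : ℕ} (hn : n ≠ 0) (p : ℕ) : eulerBesselJ n p 0 = 0 := by
  simp [eulerBesselJ, hn]

theorem abs_besselCoeff_le (n k : ℕ) : |besselCoeff n k| ≤ (k ! : ℝ)⁻¹ := by
  rw [besselCoeff, abs_div, abs_pow, abs_neg, abs_one, one_pow, one_div,
    abs_of_pos (by positivity)]
  exact inv_anti₀ (by positivity) (le_mul_of_one_le_right (by positivity)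
    (by exact_mod_cast (n + k).factorial_pos))

theorem besselCoeff_succ (n k : ℕ) :
    (((n + 2 * (k + 1) : ℕ) : ℝ) ^ 2 - (n : ℝ) ^ 2) * besselCoeff n (k + 1) =
      -4 * besselCoeff n k := by
  rw [besselCoeff, besselCoeff, show n + (k + 1) = n + k + 1 by ring, Nat.factorial_succ,
    Nat.factorial_succ]
  push_cast
  field_simp
  ring

theorem summable_pow_mul_pow_div_factorial (n q : ℕ) {R : ℝ} (hR : 0 ≤ R) :
    Summable fun k : ℕ => ((n + 2 * k : ℕ) : ℝ) ^ q * R ^ (n + 2 * k) / k ! := by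
  refine .of_nonneg_of_le (fun k => by positivity) (fun k => ?_)
    ((Real.summable_pow_div_factorial ((Real.exp 1 * R) ^ 2)).mul_left
      (q ! * (Real.exp 1 * R) ^ n))
  -- `m ^ q ≤ q! e ^ m`, a single term of the exponential series
  have hm : ((n + 2 * k : ℕ) : ℝ) ^ q ≤ q ! * Real.exp 1 ^ (n + 2 * k) := by
    have := Real.pow_div_factorial_le_exp _ (Nat.cast_nonneg (n + 2 * k)) q
    rw [div_le_iff₀ (by positivity)] at this
    rw [Real.exp_one_pow]
    linarith
  calc ((n + 2 * k : ℕ) : ℝ) ^ q * R ^ (n + 2 * k) / k !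
      ≤ q ! * Real.exp 1 ^ (n + 2 * k) * R ^ (n + 2 * k) / k ! := by gcongr
    _ = q ! * (Real.exp 1 * R) ^ n * (((Real.exp 1 * R) ^ 2) ^ k / k !) := by ring

theorem abs_pow_mul_besselCoeff_mul_pow_le (n p k e : ℕ) {y R : ℝ} (hy : |y| ≤ R) :
    |((n + 2 * k : ℕ) : ℝ) ^ p * besselCoeff n k * y ^ e| ≤
      ((n + 2 * k : ℕ) : ℝ) ^ p * R ^ e / k ! := by
  have hR : 0 ≤ R := (abs_nonneg y).trans hy
  rw [abs_mul, abs_mul, abs_of_nonneg (by positivity : (0 : ℝ) ≤ ((n + 2 * k : ℕ) : ℝ) ^ p),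
    abs_pow, div_eq_mul_inv, mul_assoc, mul_assoc, mul_comm (R ^ e)]
  gcongr
  exact abs_besselCoeff_le n k

theorem hasSum_eulerBesselJ (n p : ℕ) (x : ℝ) :
    HasSum (fun k => ((n + 2 * k : ℕ) : ℝ) ^ p * besselCoeff n k * (x / 2) ^ (n + 2 * k))
      (eulerBesselJ n p x) :=
  Summable.hasSum <| .of_abs <| .of_nonneg_of_le (fun _ => abs_nonneg _)
    (fun k => abs_pow_mul_besselCoeff_mul_pow_le n p k _ le_rfl)
    (summable_pow_mul_pow_div_factorial n p (abs_nonneg _))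

theorem hasDerivAt_eulerBesselJ (n p : ℕ) (x : ℝ) :
    HasDerivAt (eulerBesselJ n p)
      (∑' k, ((n + 2 * k : ℕ) : ℝ) ^ p * besselCoeff n k *
        ((n + 2 * k : ℕ) * (x / 2) ^ (n + 2 * k - 1) / 2)) x := by
  set R := |x| + 1
  have hR : 1 ≤ R := le_add_of_nonneg_left (abs_nonneg x)
  have hx : x ∈ Ioo (-(2 * R)) (2 * R) := by
    constructor <;> linarith [neg_abs_le x, le_abs_self x]
  unfold eulerBesselJ
  refine hasDerivAt_tsum_of_isPreconnected (g := fun k y => ((n + 2 * k : ℕ) : ℝ) ^ p *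
      besselCoeff n k * (y / 2) ^ (n + 2 * k)) (g' := fun k y => ((n + 2 * k : ℕ) : ℝ) ^ p *
      besselCoeff n k * ((n + 2 * k : ℕ) * (y / 2) ^ (n + 2 * k - 1) / 2))
    ((summable_pow_mul_pow_div_factorial n (p + 1) (zero_le_one.trans hR)))
    isOpen_Ioo isPreconnected_Ioo (fun k y _ => ?_) (fun k y hy => ?_) hx
    (hasSum_eulerBesselJ n p x).summable hx
  · exact ((((hasDerivAt_id' y).div_const 2).fun_pow (n + 2 * k)).const_mul _).congr_deriv
      (by ring)
  · have hy : |y / 2| ≤ R := by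
      rw [abs_div, abs_two, div_le_iff₀ two_pos]
      exact abs_le.2 ⟨by linarith [hy.1], by linarith [hy.2]⟩
    have hbound := abs_pow_mul_besselCoeff_mul_pow_le n (p + 1) k (n + 2 * k - 1) hy
    have hRpow : R ^ (n + 2 * k - 1) ≤ R ^ (n + 2 * k) := pow_le_pow_right₀ hR (Nat.sub_le _ _)
    calc ‖((n + 2 * k : ℕ) : ℝ) ^ p * besselCoeff n k *
          ((n + 2 * k : ℕ) * (y / 2) ^ (n + 2 * k - 1) / 2)‖
        = |((n + 2 * k : ℕ) : ℝ) ^ (p + 1) * besselCoeff n k * (y / 2) ^ (n + 2 * k - 1)| / 2 := by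
          rw [Real.norm_eq_abs, pow_succ, ← abs_two, ← abs_div]
          ring_nf
      _ ≤ ((n + 2 * k : ℕ) : ℝ) ^ (p + 1) * R ^ (n + 2 * k) / k ! / 2 := by
          gcongr
          exact hbound.trans (by gcongr)
      _ ≤ ((n + 2 * k : ℕ) : ℝ) ^ (p + 1) * R ^ (n + 2 * k) / k ! :=
          half_le_self (by positivity)

theorem differentiable_eulerBesselJ (n p : ℕ) : Differentiable ℝ (eulerBesselJ n p) :=
  fun x => (hasDerivAt_eulerBesselJ n p x).differentiableAt

theorem mul_deriv_eulerBesselJ (n p : ℕ) (x : ℝ) :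
    x * deriv (eulerBesselJ n p) x = eulerBesselJ n (p + 1) x := by
  rw [(hasDerivAt_eulerBesselJ n p x).deriv, ← tsum_mul_left, eulerBesselJ]
  congr 1
  ext k
  generalize n + 2 * k = m
  rcases Nat.eq_zero_or_pos m with rfl | hm
  · simp
  · rw [← pow_sub_one_mul hm.ne' (x / 2)]
    ring

theorem eulerBesselJ_two (n : ℕ) (x : ℝ) :
    eulerBesselJ n 2 x = ((n : ℝ) ^ 2 - x ^ 2) * eulerBesselJ n 0 x := by
  have hD := (hasSum_eulerBesselJ n 2 x).sub ((hasSum_eulerBesselJ n 0 x).mul_left ((n : ℝ) ^ 2))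
  rw [← hasSum_nat_add_iff' 1] at hD
  have hpow (k : ℕ) : (x / 2) ^ (n + 2 * (k + 1)) = (x / 2) ^ (n + 2 * k) * (x / 2) ^ 2 := by
    rw [← pow_add]
    ring_nf
  have hD_succ (k : ℕ) :
      ((n + 2 * (k + 1) : ℕ) : ℝ) ^ 2 * besselCoeff n (k + 1) * (x / 2) ^ (n + 2 * (k + 1)) -
        (n : ℝ) ^ 2 * (((n + 2 * (k + 1) : ℕ) : ℝ) ^ 0 * besselCoeff n (k + 1) *
          (x / 2) ^ (n + 2 * (k + 1))) =
      -x ^ 2 * (((n + 2 * k : ℕ) : ℝ) ^ 0 * besselCoeff n k * (x / 2) ^ (n + 2 * k)) := by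
    rw [hpow]
    linear_combination (x / 2) ^ (n + 2 * k) * (x / 2) ^ 2 * besselCoeff_succ n k
  simp only [hD_succ, Finset.range_one, Finset.sum_singleton] at hD
  linear_combination -((hasSum_eulerBesselJ n 0 x).mul_left (-x ^ 2)).unique hD

theorem eventually_pos_eulerBesselJ {n : ℕ} (hn : n ≠ 0) (p : ℕ) :
    ∀ᶠ x in 𝓝[>] 0, 0 < eulerBesselJ n p x := by
  set F : ℝ → ℝ := fun x => ∑' k, ((n + 2 * k : ℕ) : ℝ) ^ p * besselCoeff n k * (x / 2) ^ (2 * k)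
  have hfactor (x : ℝ) : eulerBesselJ n p x = (x / 2) ^ n * F x := by
    rw [eulerBesselJ, ← tsum_mul_left]
    congr 1
    ext k
    ring
  have hF0 : F 0 = (n : ℝ) ^ p / n ! := by
    rw [show F 0 = _ from tsum_eq_single 0 fun k hk => by simp [hk]]
    simp [besselCoeff, div_eq_mul_inv]
  have hF : ContinuousAt F 0 := by
    refine (continuousOn_tsum (s := Icc (-2) 2) (fun k => by fun_prop)
      (summable_pow_mul_pow_div_factorial n p zero_le_one) fun k y hy => ?_).continuousAt
      (Icc_mem_nhds (by norm_num) (by norm_num))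
    have hy : |y / 2| ≤ 1 := by
      rw [abs_div, abs_two, div_le_one two_pos]
      exact abs_le.2 hy
    simpa only [one_pow, Real.norm_eq_abs] using abs_pow_mul_besselCoeff_mul_pow_le n p k (2 * k) hy
  have hF0_pos : 0 < F 0 := by
    rw [hF0]
    exact div_pos (pow_pos (by exact_mod_cast Nat.pos_of_ne_zero hn) p) (by positivity)
  filter_upwards [nhdsWithin_le_nhds (hF.eventually (lt_mem_nhds hF0_pos)),
    self_mem_nhdsWithin] with x hFx hx
  rw [hfactor]
  exact mul_pos (pow_pos (half_pos hx) n) hFx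

theorem monotoneOn_besselJnat {n : ℕ} (hn : n ≠ 0) : MonotoneOn (besselJnat n) (Icc 0 n) := by
  have hcont (p : ℕ) : ContinuousOn (eulerBesselJ n p) (Icc 0 n) :=
    (differentiable_eulerBesselJ n p).continuous.continuousOn
  have hpos := pos_on_Ioc_of_deriv_pos_of_pos (hcont 0) (hcont 1)
    (eulerBesselJ_apply_zero hn 0).ge (eulerBesselJ_apply_zero hn 1).ge
    ((eventually_pos_eulerBesselJ hn 0).and (eventually_pos_eulerBesselJ hn 1))
    (fun x hx hg => pos_of_mul_pos_right ((mul_deriv_eulerBesselJ n 0 x).symm ▸ hg) hx.1.le)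
    (fun x hx hf => by
      refine pos_of_mul_pos_right ?_ hx.1.le
      rw [mul_deriv_eulerBesselJ, eulerBesselJ_two]
      exact mul_pos (by nlinarith [hx.1, hx.2]) hf)
  rw [← eulerBesselJ_zero]
  refine monotoneOn_of_deriv_nonneg (convex_Icc 0 (n : ℝ)) (hcont 0)
    (differentiable_eulerBesselJ n 0).differentiableOn fun x hx => ?_
  rw [interior_Icc] at hx
  exact (pos_of_mul_pos_right ((mul_deriv_eulerBesselJ n 0 x).symm ▸
    (hpos x ⟨hx.1, hx.2.le⟩).2) hx.1.le).le

theorem besselJ_natCast (n : ℕ) : besselJ n = besselJnat n := by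
  ext
  simp [besselJ]

theorem norm_fourierBessel (lam : ℝ) (j : ℤ) (z : ℂ) :
    ‖fourierBessel lam j z‖ = |besselJ j (lam * ‖z‖)| := by
  rw [fourierBessel, norm_mul, Complex.norm_exp, Complex.norm_real, Real.norm_eq_abs]
  simp

theorem ciSup_norm_fourierBessel {lam : ℝ} {j : ℤ} (hlam : 0 ≤ lam)
    (hmono : MonotoneOn (besselJ j) (Icc 0 lam)) (h0 : 0 ≤ besselJ j 0) :
    (⨆ z : closedBall (0 : ℂ) 1, ‖fourierBessel lam j z‖) = besselJ j lam := by
  have hnonneg {t : ℝ} (ht : t ∈ Icc 0 lam) : 0 ≤ besselJ j t :=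
    h0.trans (hmono (left_mem_Icc.2 hlam) ht ht.1)
  have hle (z : closedBall (0 : ℂ) 1) : ‖fourierBessel lam j z‖ ≤ besselJ j lam := by
    have hz : ‖(z : ℂ)‖ ≤ 1 := mem_closedBall_zero_iff.1 z.2
    have ht : lam * ‖(z : ℂ)‖ ∈ Icc 0 lam :=
      ⟨mul_nonneg hlam (norm_nonneg _), mul_le_of_le_one_right hlam hz⟩
    rw [norm_fourierBessel, abs_of_nonneg (hnonneg ht)]
    exact hmono ht (right_mem_Icc.2 hlam) ht.2
  have hone : ‖fourierBessel lam j 1‖ = besselJ j lam := by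
    rw [norm_fourierBessel, norm_one, mul_one, abs_of_nonneg (hnonneg (right_mem_Icc.2 hlam))]
  have h1 : (1 : ℂ) ∈ closedBall (0 : ℂ) 1 := by simp
  have : Nonempty (closedBall (0 : ℂ) 1) := ⟨⟨1, h1⟩⟩
  exact IsLUB.ciSup_eq (IsGreatest.isLUB ⟨⟨⟨1, h1⟩, hone⟩, by rintro _ ⟨z, rfl⟩; exact hle z⟩)

/-- For an integer `j > λ`, the function `r ↦ J_j(λr)` is monotone increasing
on `[0,1]`; consequently `sup_{x ∈ Ω} |b_{λ,j}(x)| = J_j(λ)` on the closed unit disk. -/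
theorem stmt_8 (lam : ℝ) (hlam : 0 < lam) (j : ℤ) (hj : lam < (j : ℝ)) :
    MonotoneOn (fun r : ℝ => besselJ j (lam * r)) (Set.Icc 0 1) ∧
    (⨆ z : closedBall (0 : ℂ) 1, ‖fourierBessel lam j ↑z‖) = besselJ j lam := by
  lift j to ℕ using (by exact_mod_cast (hlam.trans hj).le)
  rw [Int.cast_natCast] at hj
  have hj0 : j ≠ 0 := by
    rintro rfl
    exact (hlam.trans hj).ne' Nat.cast_zero
  have hmono : MonotoneOn (besselJ j) (Icc 0 lam) :=
    besselJ_natCast j ▸ (monotoneOn_besselJnat hj0).mono (Icc_subset_Icc_right hj.le)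
  have hJ0 : besselJ j 0 = 0 := by
    rw [besselJ_natCast, ← eulerBesselJ_zero, eulerBesselJ_apply_zero hj0]
  refine ⟨hmono.comp (fun a _ b _ hab => mul_le_mul_of_nonneg_left hab hlam.le)
    fun r hr => ⟨mul_nonneg hlam.le hr.1, mul_le_of_le_one_right hlam.le hr.2⟩,
    ciSup_norm_fourierBessel hlam.le hmono hJ0.ge⟩
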